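/- Let a, b, c be columns over A such that a ∧ b ≠ b and b ∧ c ≠ c. Then a ∧ (b ∨ c) ≠ b ∨ c and (a ∧ b) ∧ c ≠ c. -/
import Mathlib

/-- One step of Schensted's column matching: try to match the letter `x`
to the smallest still-unmatched letter `y` of the state with `x ≤ y`.
The state is `(remaining unmatched letters of b, matched letters of b)`. -/
def matchStep {n : ℕ} (x : Fin n) (st : Finset (Fin n) × Finset (Fin n)) :
    Finset (Fin n) × Finset (Fin n) :=
  let cand := st.1.filter (fun y => x ≤ y)
  if h : cand.Nonempty then (st.1.erase (cand.min' h), insert (cand.min' h) st.2)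
  else st

/-- `colMatch a b` is the set `b_a` of connected (matched) letters of the column `b`,
obtained by scanning the letters of the column `a` in increasing order and matching
each letter `x` of `a` to the smallest not-yet-matched letter `y` of `b` with `y ≥ x`. -/
def colMatch {n : ℕ} (a b : Finset (Fin n)) : Finset (Fin n) :=
  ((a.sort (· ≤ ·)).foldl (fun st x => matchStep x st) (b, (∅ : Finset (Fin n)))).2

/-- The column `a ∨ b`, with letter set `{a} ∪ b^a`. -/
def vee {n : ℕ} (a b : Finset (Fin n)) : Finset (Fin n) := a ∪ (b \ colMatch a b)

/-- The column `a ∧ b`, with letter set `b_a`. -/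
def wedge {n : ℕ} (a b : Finset (Fin n)) : Finset (Fin n) := colMatch a b

section Aux

open Finset

variable {n : ℕ}

lemma matchStep_of_nonempty (x : Fin n) (R M : Finset (Fin n))
    (h : (R.filter (fun y => x ≤ y)).Nonempty) :
    matchStep x (R, M) = (R.erase ((R.filter (fun y => x ≤ y)).min' h),
      insert ((R.filter (fun y => x ≤ y)).min' h) M) := by
  simp only [matchStep, dif_pos h]

lemma matchStep_of_empty (x : Fin n) (R M : Finset (Fin n))
    (h : ¬ (R.filter (fun y => x ≤ y)).Nonempty) :
    matchStep x (R, M) = (R, M) := by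
  simp only [matchStep, dif_neg h]

lemma foldl_union (l : List (Fin n)) (R M : Finset (Fin n)) :
    (l.foldl (fun st x => matchStep x st) (R, M)).1 ∪
      (l.foldl (fun st x => matchStep x st) (R, M)).2 = R ∪ M := by
  induction l generalizing R M with
  | nil => rfl
  | cons x l ih =>
    rw [List.foldl_cons]
    by_cases h : (R.filter (fun y => x ≤ y)).Nonempty
    · rw [matchStep_of_nonempty x R M h, ih]
      set y0 := (R.filter (fun y => x ≤ y)).min' h with hy0
      have hy : y0 ∈ R := mem_of_mem_filter _ (min'_mem _ h)
      rw [union_insert, ← insert_union, insert_erase hy]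
    · rw [matchStep_of_empty x R M h, ih]

/-- Key helper: if every element of `R.filter (≤ t)` is `< x` and `x ≤ t`, then
the count bound against `x :: l'` improves to a bound against `l'`. -/
lemma count_helper (l' : List (Fin n)) (R : Finset (Fin n)) (x t : Fin n) (hxt : x ≤ t)
    (hS : ∀ r ∈ R.filter (fun y => y ≤ t), r < x)
    (h : ∀ s : Fin n, (R.filter (fun y => y ≤ s)).card ≤ (x :: l').countP (fun y => y ≤ s)) :
    (R.filter (fun y => y ≤ t)).card ≤ l'.countP (fun y => y ≤ t) := by
  rcases Nat.eq_zero_or_pos x.val with hx0 | hx0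
  · have : R.filter (fun y => y ≤ t) = ∅ := by
      apply eq_empty_of_forall_notMem
      intro r hr
      have := hS r hr
      omega
    simp [this]
  · have hx1 : x.val - 1 < n := by omega
    set t' : Fin n := ⟨x.val - 1, hx1⟩ with ht'
    have hsub : R.filter (fun y => y ≤ t) ⊆ R.filter (fun y => y ≤ t') := by
      intro r hr
      have hrx := hS r hr
      rw [mem_filter] at hr ⊢
      refine ⟨hr.1, ?_⟩
      have : r.val < x.val := hrx
      show r.val ≤ x.val - 1
      omega
    have h1 : (R.filter (fun y => y ≤ t)).card ≤ (x :: l').countP (fun y => y ≤ t') :=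
      le_trans (card_le_card hsub) (h t')
    have hxt' : ¬ (x ≤ t') := by
      simp only [ht']
      intro hc
      have : x.val ≤ x.val - 1 := hc
      omega
    rw [List.countP_cons] at h1
    simp only [decide_eq_true_eq, hxt', if_false, add_zero] at h1
    refine le_trans h1 (List.countP_mono_left ?_)
    intro r _ hr
    simp only [decide_eq_true_eq] at hr ⊢
    have : r.val ≤ x.val - 1 := hr
    have : x.val ≤ t.val := hxt
    show r.val ≤ t.val
    omega

/-- Hard direction: if `b`'s counts are dominated by the counts of the remaining list,
the greedy matching empties the remaining set. -/
lemma foldl_fst_empty (l : List (Fin n)) (R M : Finset (Fin n))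
    (h : ∀ t : Fin n, (R.filter (fun y => y ≤ t)).card ≤ l.countP (fun y => y ≤ t)) :
    (l.foldl (fun st x => matchStep x st) (R, M)).1 = ∅ := by
  induction l generalizing R M with
  | nil =>
    simp only [List.foldl_nil]
    apply eq_empty_of_forall_notMem
    intro r hr
    have := h r
    simp only [List.countP_nil, Nat.le_zero, card_eq_zero] at this
    have : r ∈ R.filter (fun y => y ≤ r) := by
      rw [mem_filter]; exact ⟨hr, le_refl r⟩
    rw [‹R.filter (fun y => y ≤ r) = ∅›] at this
    exact notMem_empty r this
  | cons x l ih =>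
    rw [List.foldl_cons]
    by_cases hc : (R.filter (fun y => x ≤ y)).Nonempty
    · rw [matchStep_of_nonempty x R M hc]
      set y0 := (R.filter (fun y => x ≤ y)).min' hc with hy0
      have hy0R : y0 ∈ R := mem_of_mem_filter _ (min'_mem _ hc)
      have hxy0 : x ≤ y0 := (mem_filter.mp (min'_mem _ hc)).2
      have hy0min : ∀ r ∈ R, x ≤ r → y0 ≤ r := by
        intro r hr hxr
        exact min'_le _ r (mem_filter.mpr ⟨hr, hxr⟩)
      apply ih
      intro t
      by_cases hyt : y0 ≤ t
      · have hxt : x ≤ t := le_trans hxy0 hyt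
        have hmem : y0 ∈ R.filter (fun y => y ≤ t) := mem_filter.mpr ⟨hy0R, hyt⟩
        rw [filter_erase, card_erase_of_mem hmem]
        have h1 := h t
        rw [List.countP_cons] at h1
        simp only [decide_eq_true_eq, hxt, if_true] at h1
        omega
      · have heq : (R.erase y0).filter (fun y => y ≤ t) = R.filter (fun y => y ≤ t) := by
          rw [filter_erase, erase_eq_of_notMem]
          intro hmem
          exact hyt (mem_filter.mp hmem).2
        rw [heq]
        by_cases hxt : x ≤ t
        · apply count_helper l R x t hxt _ h
          intro r hr
          rw [mem_filter] at hr
          by_contra hcon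
          push_neg at hcon
          exact hyt (le_trans (hy0min r hr.1 hcon) hr.2)
        · have h1 := h t
          rw [List.countP_cons] at h1
          simpa only [decide_eq_true_eq, hxt, if_false, add_zero] using h1
    · rw [matchStep_of_empty x R M hc]
      apply ih
      intro t
      by_cases hxt : x ≤ t
      · apply count_helper l R x t hxt _ h
        intro r hr
        by_contra hcon
        push_neg at hcon
        exact hc ⟨r, mem_filter.mpr ⟨(mem_filter.mp hr).1, hcon⟩⟩
      · have h1 := h t
        rw [List.countP_cons] at h1
        simpa only [decide_eq_true_eq, hxt, if_false, add_zero] using h1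

/-- Easy direction: counts of the matched set are dominated by counts of the scanned list. -/
lemma foldl_snd_count (l : List (Fin n)) (R M : Finset (Fin n)) (t : Fin n) :
    ((l.foldl (fun st x => matchStep x st) (R, M)).2.filter (fun y => y ≤ t)).card ≤
      (M.filter (fun y => y ≤ t)).card + l.countP (fun y => y ≤ t) := by
  induction l generalizing R M with
  | nil => simp
  | cons x l ih =>
    rw [List.foldl_cons, List.countP_cons]
    by_cases hc : (R.filter (fun y => x ≤ y)).Nonempty
    · rw [matchStep_of_nonempty x R M hc]
      set y0 := (R.filter (fun y => x ≤ y)).min' hc with hy0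
      have hxy0 : x ≤ y0 := (mem_filter.mp (min'_mem _ hc)).2
      refine le_trans (ih _ _) ?_
      have hkey : ((insert y0 M).filter (fun y => y ≤ t)).card ≤
          (M.filter (fun y => y ≤ t)).card + if decide (x ≤ t) = true then 1 else 0 := by
        rw [filter_insert]
        by_cases hyt : y0 ≤ t
        · have hxt : x ≤ t := le_trans hxy0 hyt
          simp only [hyt, if_true, decide_eq_true_eq, hxt]
          exact card_insert_le _ _
        · simp only [hyt, if_false]
          exact Nat.le_add_right _ _
      omega
    · rw [matchStep_of_empty x R M hc]
      refine le_trans (ih _ _) ?_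
      omega

lemma sort_countP (a : Finset (Fin n)) (t : Fin n) :
    (a.sort (· ≤ ·)).countP (fun y => y ≤ t) = (a.filter (fun y => y ≤ t)).card := by
  have hp := Finset.sort_perm_toList (α := Fin n) (r := (· ≤ ·)) a
  rw [hp.countP_eq]
  have h2 : a.toList.countP (fun y => decide (y ≤ t)) =
      Multiset.countP (fun y => y ≤ t) a.val := by
    rw [← Finset.coe_toList a, Multiset.coe_countP (fun y => y ≤ t) a.toList]
  rw [h2, Multiset.countP_eq_card_filter]
  rfl

lemma colMatch_subset (a b : Finset (Fin n)) : colMatch a b ⊆ b := by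
  have h := foldl_union (a.sort (· ≤ ·)) b (∅ : Finset (Fin n))
  rw [union_empty] at h
  intro y hy
  rw [← h]
  exact mem_union_right _ hy

lemma wedge_eq_iff (a b : Finset (Fin n)) :
    wedge a b = b ↔ ∀ t : Fin n,
      (b.filter (fun y => y ≤ t)).card ≤ (a.filter (fun y => y ≤ t)).card := by
  constructor
  · intro h t
    have := foldl_snd_count (a.sort (· ≤ ·)) b (∅ : Finset (Fin n)) t
    rw [show ((a.sort (· ≤ ·)).foldl (fun st x => matchStep x st) (b, (∅ : Finset (Fin n)))).2
        = colMatch a b from rfl] at this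
    rw [wedge] at h
    rw [h, sort_countP] at this
    simpa using this
  · intro h
    have hempty := foldl_fst_empty (a.sort (· ≤ ·)) b (∅ : Finset (Fin n))
      (by intro t; rw [sort_countP]; exact h t)
    have hu := foldl_union (a.sort (· ≤ ·)) b (∅ : Finset (Fin n))
    rw [hempty, empty_union, union_empty] at hu
    exact hu

end Aux

/-- Let `a, b, c` be columns over `A` such that `a ∧ b ≠ b` and `b ∧ c ≠ c`.
Then `a ∧ (b ∨ c) ≠ b ∨ c and `(a ∧ b) ∧ c ≠ c`. -/
theorem keep_chain (n : ℕ) (hn : 1 ≤ n) (a b c : Finset (Fin n))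
    (hab : wedge a b ≠ b) (hbc : wedge b c ≠ c) :
    wedge a (vee b c) ≠ vee b c ∧ wedge (wedge a b) c ≠ c := by
  rw [Ne, wedge_eq_iff] at hab hbc
  push_neg at hab hbc
  obtain ⟨t₁, ht₁⟩ := hab
  obtain ⟨t₂, ht₂⟩ := hbc
  constructor
  · intro h
    rw [wedge_eq_iff] at h
    have h1 := h t₁
    have h2 : (b.filter (fun y => y ≤ t₁)).card ≤
        ((vee b c).filter (fun y => y ≤ t₁)).card :=
      Finset.card_le_card (Finset.filter_subset_filter _ Finset.subset_union_left)
    omega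
  · intro h
    rw [wedge_eq_iff] at h
    have h1 := h t₂
    have h2 : ((wedge a b).filter (fun y => y ≤ t₂)).card ≤
        (b.filter (fun y => y ≤ t₂)).card :=
      Finset.card_le_card (Finset.filter_subset_filter _ (colMatch_subset a b))
    omega
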